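/- arXiv:2605.02057 — 3 statements merged into one kernel-verified Lean document; each statement's English description precedes it below -/
import Mathlib

section
/- Let {F_s} be a POVM (F_s positive semidefinite with ∑_s F_s = 1), let Δ be Hermitian, and let σ be a density matrix satisfying σ ⪰ μ·I for some μ > 0. Then ∑_s tr(F_s Δ)² / tr(F_s σ) ≤ μ⁻¹ · tr(Δ²). -/
/-!
Cauchy–Schwarz for the `F`-weighted Hilbert–Schmidt inner product `⟪X, Y⟫ = tr(Y F Xᴴ)`, applied
to `1` and `Δ`, gives `tr(F Δ)² ≤ tr(F) · tr(F Δ²)`, while `σ ⪰ μ I` gives `tr(F σ) ≥ μ tr(F)`.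
So every outcome contributes at most `μ⁻¹ tr(F_s Δ²)`, and these sum to `μ⁻¹ tr(Δ²)`
because `∑ F_s = 1`.
-/

open Matrix ComplexOrder

namespace Matrix

variable {n 𝕜 : Type*} [Fintype n] [RCLike 𝕜]

lemma PosSemidef.norm_trace_mul_mul_conjTranspose_sq_le {M : Matrix n n 𝕜} (hM : M.PosSemidef)
    (X Y : Matrix n n 𝕜) :
    ‖(Y * M * Xᴴ).trace‖ ^ 2 ≤
      RCLike.re (X * M * Xᴴ).trace * RCLike.re (Y * M * Yᴴ).trace := by
  let _ := M.toMatrixSeminormedAddCommGroup hM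
  let _ := M.toMatrixInnerProductSpace hM
  have h := inner_mul_inner_self_le (𝕜 := 𝕜) X Y
  rw [← inner_conj_symm Y X, RCLike.norm_conj, ← sq] at h
  exact h

variable [DecidableEq n]

open scoped MatrixOrder in
lemma PosSemidef.trace_mul_nonneg {A B : Matrix n n 𝕜} (hA : A.PosSemidef)
    (hB : B.PosSemidef) : 0 ≤ (A * B).trace := by
  obtain ⟨C, rfl⟩ := CStarAlgebra.nonneg_iff_eq_star_mul_self.mp hA.nonneg
  rw [star_eq_conjTranspose, Matrix.mul_assoc, trace_mul_comm]
  exact (hB.mul_mul_conjTranspose_same C).trace_nonneg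

lemma PosSemidef.re_trace_mul_nonneg {A B : Matrix n n 𝕜} (hA : A.PosSemidef)
    (hB : B.PosSemidef) : 0 ≤ RCLike.re (A * B).trace :=
  (RCLike.nonneg_iff.mp (hA.trace_mul_nonneg hB)).1

lemma PosSemidef.sq_re_trace_mul_le {F Δ : Matrix n n 𝕜} (hF : F.PosSemidef)
    (hΔ : Δ.IsHermitian) :
    RCLike.re (F * Δ).trace ^ 2 ≤ RCLike.re F.trace * RCLike.re (F * Δ ^ 2).trace := by
  have h := hF.norm_trace_mul_mul_conjTranspose_sq_le 1 Δ
  have hcycle : (Δ * F * Δ).trace = (F * Δ ^ 2).trace := by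
    rw [Matrix.mul_assoc, trace_mul_comm, Matrix.mul_assoc, sq]
  simp only [conjTranspose_one, Matrix.mul_one, Matrix.one_mul, hΔ.eq, hcycle] at h
  rw [trace_mul_comm] at h
  exact (sq_le_sq' (neg_le_of_abs_le (RCLike.abs_re_le_norm _)) (RCLike.re_le_norm _)).trans h

lemma PosSemidef.mul_re_trace_le_re_trace_mul {F σ : Matrix n n 𝕜} {μ : ℝ}
    (hF : F.PosSemidef) (hμσ : (σ - (μ : 𝕜) • 1).PosSemidef) :
    μ * RCLike.re F.trace ≤ RCLike.re (F * σ).trace := by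
  have h := hF.re_trace_mul_nonneg hμσ
  rw [Matrix.mul_sub, trace_sub, Matrix.mul_smul, Matrix.mul_one, trace_smul, map_sub,
    smul_eq_mul, RCLike.re_ofReal_mul] at h
  linarith

lemma PosSemidef.sq_re_trace_mul_div_le {F Δ σ : Matrix n n 𝕜} {μ : ℝ} (hμ : 0 < μ)
    (hF : F.PosSemidef) (hΔ : Δ.IsHermitian) (hμσ : (σ - (μ : 𝕜) • 1).PosSemidef) :
    RCLike.re (F * Δ).trace ^ 2 / RCLike.re (F * σ).trace ≤
      μ⁻¹ * RCLike.re (F * Δ ^ 2).trace := by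
  have hFΔ : 0 ≤ RCLike.re (F * Δ ^ 2).trace :=
    hF.re_trace_mul_nonneg (by simpa [sq, hΔ.eq] using posSemidef_conjTranspose_mul_self Δ)
  have hden := hF.mul_re_trace_le_re_trace_mul hμσ
  have hF₀ : 0 ≤ RCLike.re F.trace := (RCLike.nonneg_iff.mp hF.trace_nonneg).1
  rcases ((mul_nonneg hμ.le hF₀).trans hden).eq_or_lt with h0 | hpos
  · rw [← h0, div_zero]
    exact mul_nonneg (inv_nonneg.mpr hμ.le) hFΔ
  · rw [div_le_iff₀ hpos]
    calc RCLike.re (F * Δ).trace ^ 2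
        ≤ RCLike.re F.trace * RCLike.re (F * Δ ^ 2).trace := hF.sq_re_trace_mul_le hΔ
      _ ≤ μ⁻¹ * RCLike.re (F * σ).trace * RCLike.re (F * Δ ^ 2).trace := by
        gcongr
        rwa [le_inv_mul_iff₀ hμ]
      _ = μ⁻¹ * RCLike.re (F * Δ ^ 2).trace * RCLike.re (F * σ).trace := by ring

end Matrix

theorem povm_likelihood_bound_general {d m : ℕ} (μ : ℝ) (hμ : 0 < μ)
    (F : Fin m → Matrix (Fin d) (Fin d) ℂ)
    (hFpos : ∀ s, (F s).PosSemidef) (hFsum : ∑ s, F s = 1)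
    (Δ σ : Matrix (Fin d) (Fin d) ℂ)
    (hΔ : Δ.IsHermitian)
    (hμσ : (σ - (μ : ℂ) • 1).PosSemidef) :
    ∑ s, ((F s * Δ).trace.re) ^ 2 / ((F s * σ).trace.re)
      ≤ μ⁻¹ * ((Δ ^ 2).trace.re) := by
  calc ∑ s, ((F s * Δ).trace.re) ^ 2 / ((F s * σ).trace.re)
      ≤ ∑ s, μ⁻¹ * (F s * Δ ^ 2).trace.re :=
        Finset.sum_le_sum fun s _ => (hFpos s).sq_re_trace_mul_div_le hμ hΔ hμσ
    _ = μ⁻¹ * ((Δ ^ 2).trace.re) := by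
      rw [← Finset.mul_sum, ← Complex.re_sum, ← trace_sum, ← Finset.sum_mul, hFsum,
        Matrix.one_mul]

/-- For a POVM `{F s}`, a Hermitian `Δ`, and a density matrix `σ ⪰ μ·I` with `μ > 0`,
`∑ s, tr(F_s Δ)² / tr(F_s σ) ≤ μ⁻¹ · tr(Δ²)`.  (Terms with vanishing
denominator are interpreted as `0`, which is Lean's convention for division.) -/
theorem povm_likelihood_bound {d m : ℕ} (μ : ℝ) (hμ : 0 < μ)
    (F : Fin m → Matrix (Fin d) (Fin d) ℂ)
    (hFpos : ∀ s, (F s).PosSemidef) (hFsum : ∑ s, F s = 1)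
    (Δ σ : Matrix (Fin d) (Fin d) ℂ)
    (hΔ : Δ.IsHermitian)
    (hσ : σ.PosSemidef) (hσtr : σ.trace = 1)
    (hμσ : (σ - (μ : ℂ) • 1).PosSemidef) :
    ∑ s, ((F s * Δ).trace.re) ^ 2 / ((F s * σ).trace.re)
      ≤ μ⁻¹ * ((Δ ^ 2).trace.re) :=
  povm_likelihood_bound_general μ hμ F hFpos hFsum Δ σ hΔ hμσ
end

section
/- Let {E_j} be a finite family of 2×2 positive semidefinite matrices with ∑_j E_j = I. Then for every 2×2 matrix X: ∑_j |tr(X E_j)| ≤ √2·‖X‖_F. -/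
open Matrix ComplexOrder

/-- Frobenius norm of a 2×2 complex matrix. -/
noncomputable def frob (X : Matrix (Fin 2) (Fin 2) ℂ) : ℝ :=
  Real.sqrt ((Xᴴ * X).trace.re)

lemma re_trace_conjT_mul (M : Matrix (Fin 2) (Fin 2) ℂ) :
    (Mᴴ * M).trace.re = ∑ p : Fin 2 × Fin 2, ‖M p.1 p.2‖ ^ 2 := by
  simp only [Matrix.trace, Matrix.mul_apply, Matrix.conjTranspose_apply, Matrix.diag,
    Complex.mul_re, Complex.sq_norm, Complex.normSq_apply, Fintype.sum_prod_type]
  simp [Fin.sum_univ_two, Complex.add_re, Complex.mul_re]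
  ring

lemma trace_cauchy_schwarz (M N : Matrix (Fin 2) (Fin 2) ℂ) :
    ‖(M * N).trace‖ ≤
      Real.sqrt ((Mᴴ * M).trace.re) * Real.sqrt ((Nᴴ * N).trace.re) := by
  have h1 : (M * N).trace = ∑ p : Fin 2 × Fin 2, M p.1 p.2 * N p.2 p.1 := by
    simp [Matrix.trace, Matrix.mul_apply, Matrix.diag, Fintype.sum_prod_type]
  have h2 : ‖(M * N).trace‖ ≤
      ∑ p : Fin 2 × Fin 2, ‖M p.1 p.2‖ * ‖N p.2 p.1‖ := by
    rw [h1]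
    refine (norm_sum_le _ _).trans_eq ?_
    simp [norm_mul]
  refine h2.trans ?_
  rw [re_trace_conjT_mul, re_trace_conjT_mul]
  have h3 : (∑ p : Fin 2 × Fin 2, ‖N p.1 p.2‖ ^ 2)
      = ∑ p : Fin 2 × Fin 2, ‖N p.2 p.1‖ ^ 2 :=
    Fintype.sum_equiv (Equiv.prodComm _ _) _ _ (fun p => rfl)
  rw [h3]
  exact Real.sum_mul_le_sqrt_mul_sqrt _ _ _

/-- For a single-qubit POVM `{E_j}`, `∑_j |tr(X E_j)| ≤ √2 ‖X‖_F`. -/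
theorem povm_trace_contraction {m : ℕ}
    (E : Fin m → Matrix (Fin 2) (Fin 2) ℂ)
    (hpos : ∀ j, (E j).PosSemidef) (hsum : ∑ j, E j = 1)
    (X : Matrix (Fin 2) (Fin 2) ℂ) :
    ∑ j, ‖(X * E j).trace‖ ≤ Real.sqrt 2 * frob X := by
  open MatrixOrder in
  set S : Fin m → Matrix (Fin 2) (Fin 2) ℂ := fun j => CFC.sqrt (E j) with hS
  open MatrixOrder in
  have hSsq : ∀ j, S j * S j = E j := fun j => CFC.sqrt_mul_sqrt_self (E j) (hpos j).nonneg
  open MatrixOrder in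
  have hSH : ∀ j, (S j)ᴴ = S j := fun j => (CFC.sqrt_nonneg (E j)).posSemidef.1
  -- pointwise Cauchy-Schwarz
  have step1 : ∀ j, ‖(X * E j).trace‖ ≤
      Real.sqrt (((X * S j)ᴴ * (X * S j)).trace.re) * Real.sqrt (((S j)ᴴ * S j).trace.re) := by
    intro j
    have : X * E j = (X * S j) * S j := by rw [Matrix.mul_assoc, hSsq]
    rw [this]
    exact trace_cauchy_schwarz _ _
  refine (Finset.sum_le_sum fun j _ => step1 j).trans ?_
  have cs2 := Real.sum_sqrt_mul_sqrt_le (Finset.univ : Finset (Fin m))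
    (f := fun j => ((X * S j)ᴴ * (X * S j)).trace.re)
    (g := fun j => ((S j)ᴴ * S j).trace.re)
    (fun j => by simp only [re_trace_conjT_mul]; positivity)
    (fun j => by simp only [re_trace_conjT_mul]; positivity)
  refine cs2.trans ?_
  have e1 : ∑ j, ((X * S j)ᴴ * (X * S j)).trace.re = (Xᴴ * X).trace.re := by
    have : ∀ j, ((X * S j)ᴴ * (X * S j)).trace = ((Xᴴ * X) * E j).trace := by
      intro j
      rw [Matrix.conjTranspose_mul, hSH]
      rw [show S j * Xᴴ * (X * S j) = S j * (Xᴴ * X * S j) by rw [Matrix.mul_assoc, ← Matrix.mul_assoc Xᴴ]]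
      rw [Matrix.trace_mul_comm, Matrix.mul_assoc (Xᴴ * X) (S j) (S j), hSsq]
    simp_rw [this]
    rw [← Complex.re_sum, ← Matrix.trace_sum, ← Finset.mul_sum, hsum, mul_one]
  have e2 : ∑ j, ((S j)ᴴ * S j).trace.re = 2 := by
    have : ∀ j, ((S j)ᴴ * S j).trace = (E j).trace := by
      intro j; rw [hSH, hSsq]
    simp_rw [this]
    rw [← Complex.re_sum, ← Matrix.trace_sum, hsum]
    simp [Matrix.trace_one]
  rw [e1, e2, frob, mul_comm]
end

section
/- Let {E_j} be 2×2 positive semidefinite matrices with ∑_j E_j = I. Then for every 2×2 matrix X: ∑_j ‖X E_j‖_F ≤ √2·‖X‖_F. -/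
/-!
For a 2×2 matrix, Cayley–Hamilton gives `E² = tr E • E - det E • 1`; when `E` is positive
semidefinite the determinant term is nonnegative, so
`‖X E‖_F² = tr (X E² Xᴴ) ≤ tr E · tr (X E Xᴴ)`. Cauchy–Schwarz over `j`,
together with `∑ tr E_j = 2` and `∑ tr (X E_j Xᴴ) = ‖X‖_F²`, gives the bound.
-/

open Matrix ComplexOrder

theorem Matrix.mul_self_fin_two {R : Type*} [CommRing R] (E : Matrix (Fin 2) (Fin 2) R) :
    E * E = E.trace • E - E.det • 1 := by
  ext i j
  fin_cases i <;> fin_cases j <;>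
    simp [Matrix.mul_apply, Matrix.trace, Matrix.det_fin_two, Fin.sum_univ_two] <;> ring

theorem Matrix.PosSemidef.trace_mul_mul_self_mul_conjTranspose_le {𝕜 : Type*} [RCLike 𝕜]
    {E : Matrix (Fin 2) (Fin 2) 𝕜} (hE : E.PosSemidef) (X : Matrix (Fin 2) (Fin 2) 𝕜) :
    (X * (E * E) * Xᴴ).trace ≤ E.trace * (X * E * Xᴴ).trace := by
  have hdet : 0 ≤ E.det * (X * Xᴴ).trace :=
    mul_nonneg hE.det_nonneg (posSemidef_self_mul_conjTranspose X).trace_nonneg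
  calc (X * (E * E) * Xᴴ).trace
      = E.trace * (X * E * Xᴴ).trace - E.det * (X * Xᴴ).trace := by
        simp only [mul_self_fin_two, Matrix.mul_sub, Matrix.sub_mul, Matrix.mul_smul,
          Matrix.smul_mul, Matrix.mul_one, trace_sub, trace_smul, smul_eq_mul]
    _ ≤ E.trace * (X * E * Xᴴ).trace := sub_le_self _ hdet

theorem frob_mul_le {E : Matrix (Fin 2) (Fin 2) ℂ} (hE : E.PosSemidef)
    (X : Matrix (Fin 2) (Fin 2) ℂ) :
    frob (X * E) ≤ √E.trace.re * √(X * E * Xᴴ).trace.re := by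
  have htrE := Complex.nonneg_iff.mp hE.trace_nonneg
  have hgram : ((X * E)ᴴ * (X * E)).trace = (X * (E * E) * Xᴴ).trace := by
    rw [conjTranspose_mul, hE.isHermitian.eq, trace_mul_comm, Matrix.mul_assoc,
      Matrix.mul_assoc, Matrix.mul_assoc]
  rw [← Real.sqrt_mul htrE.1]
  apply Real.sqrt_le_sqrt
  calc ((X * E)ᴴ * (X * E)).trace.re
      ≤ (E.trace * (X * E * Xᴴ).trace).re := by
        rw [hgram]; exact (Complex.le_def.mp (hE.trace_mul_mul_self_mul_conjTranspose_le X)).1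
    _ = E.trace.re * (X * E * Xᴴ).trace.re := by simp [Complex.mul_re, ← htrE.2]

/-- For a single-qubit POVM `{E_j}`, `∑_j ‖X E_j‖_F ≤ √2 ‖X‖_F`. -/
theorem povm_norm_contraction {m : ℕ}
    (E : Fin m → Matrix (Fin 2) (Fin 2) ℂ)
    (hpos : ∀ j, (E j).PosSemidef) (hsum : ∑ j, E j = 1)
    (X : Matrix (Fin 2) (Fin 2) ℂ) :
    ∑ j, frob (X * E j) ≤ Real.sqrt 2 * frob X := by
  have htrace : ∑ j, (E j).trace.re = 2 := by
    rw [← Complex.re_sum, ← trace_sum, hsum, trace_one]; simp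
  have hweight : ∑ j, (X * E j * Xᴴ).trace.re = (Xᴴ * X).trace.re := by
    rw [← Complex.re_sum, ← trace_sum, ← Finset.sum_mul, ← Finset.mul_sum, hsum,
      Matrix.mul_one, trace_mul_comm]
  calc ∑ j, frob (X * E j)
      ≤ ∑ j, √(E j).trace.re * √(X * E j * Xᴴ).trace.re :=
        Finset.sum_le_sum fun j _ ↦ frob_mul_le (hpos j) X
    _ ≤ √(∑ j, (E j).trace.re) * √(∑ j, (X * E j * Xᴴ).trace.re) :=
        Real.sum_sqrt_mul_sqrt_le _ (fun j ↦ (Complex.nonneg_iff.mp (hpos j).trace_nonneg).1)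
          fun j ↦ (Complex.nonneg_iff.mp ((hpos j).mul_mul_conjTranspose_same X).trace_nonneg).1
    _ = √2 * frob X := by rw [htrace, hweight, frob]
end
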